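/- For every formula φ of the fragment νLTL and every infinite word w over 2^Ap: w ⊨ φ if and only if for every index i, af(φ, w_{0i}) is not propositionally equivalent to ff. -/
import Mathlib


/-- LTL formulas in negation normal form over atomic propositions `Ap`. -/
inductive LTL (Ap : Type) : Type
  | tt : LTL Ap
  | ff : LTL Ap
  | atom (a : Ap) : LTL Ap
  | natom (a : Ap) : LTL Ap
  | conj (φ ψ : LTL Ap) : LTL Ap
  | disj (φ ψ : LTL Ap) : LTL Ap
  | next (φ : LTL Ap) : LTL Ap
  | fut (φ : LTL Ap) : LTL Ap
  | glob (φ : LTL Ap) : LTL Ap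
  | untl (φ ψ : LTL Ap) : LTL Ap
  | wUntl (φ ψ : LTL Ap) : LTL Ap
  | strongRel (φ ψ : LTL Ap) : LTL Ap
  | rel (φ ψ : LTL Ap) : LTL Ap

variable {Ap : Type} [DecidableEq Ap]

/-- The suffix `w_i` of an infinite word. -/
def suffix (w : ℕ → Finset Ap) (i : ℕ) : ℕ → Finset Ap := fun k => w (i + k)

/-- Standard LTL satisfaction over infinite words over `2^Ap`. -/
def Sat : (ℕ → Finset Ap) → LTL Ap → Prop
  | _, .tt => True
  | _, .ff => False
  | w, .atom a => a ∈ w 0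
  | w, .natom a => a ∉ w 0
  | w, .conj φ ψ => Sat w φ ∧ Sat w ψ
  | w, .disj φ ψ => Sat w φ ∨ Sat w ψ
  | w, .next φ => Sat (suffix w 1) φ
  | w, .fut φ => ∃ k, Sat (suffix w k) φ
  | w, .glob φ => ∀ k, Sat (suffix w k) φ
  | w, .untl φ ψ => ∃ k, Sat (suffix w k) ψ ∧ ∀ j < k, Sat (suffix w j) φ
  | w, .wUntl φ ψ =>
      (∀ k, Sat (suffix w k) φ) ∨ (∃ k, Sat (suffix w k) ψ ∧ ∀ j < k, Sat (suffix w j) φ)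
  | w, .strongRel φ ψ => ∃ k, Sat (suffix w k) φ ∧ ∀ j ≤ k, Sat (suffix w j) ψ
  | w, .rel φ ψ =>
      (∀ k, Sat (suffix w k) ψ) ∨ (∃ k, Sat (suffix w k) φ ∧ ∀ j ≤ k, Sat (suffix w j) ψ)

/-- The "after" function on a single letter `ν ∈ 2^Ap`. -/
def afLetter : LTL Ap → Finset Ap → LTL Ap
  | .tt, _ => .tt
  | .ff, _ => .ff
  | .atom a, ν => if a ∈ ν then .tt else .ff
  | .natom a, ν => if a ∈ ν then .ff else .tt
  | .conj φ ψ, ν => .conj (afLetter φ ν) (afLetter ψ ν)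
  | .disj φ ψ, ν => .disj (afLetter φ ν) (afLetter ψ ν)
  | .next φ, _ => φ
  | .fut φ, ν => .disj (afLetter φ ν) (.fut φ)
  | .glob φ, ν => .conj (afLetter φ ν) (.glob φ)
  | .untl φ ψ, ν => .disj (afLetter ψ ν) (.conj (afLetter φ ν) (.untl φ ψ))
  | .wUntl φ ψ, ν => .disj (afLetter ψ ν) (.conj (afLetter φ ν) (.wUntl φ ψ))
  | .strongRel φ ψ, ν => .conj (afLetter ψ ν) (.disj (afLetter φ ν) (.strongRel φ ψ))
  | .rel φ ψ, ν => .conj (afLetter ψ ν) (.disj (afLetter φ ν) (.rel φ ψ))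

/-- The "after" function extended to finite words. -/
def af : LTL Ap → List (Finset Ap) → LTL Ap
  | φ, [] => φ
  | φ, ν :: u => af (afLetter φ ν) u

/-- The finite prefix `w_{0i} = w[0]⋯w[i-1]` of an infinite word. -/
def prefixWord (w : ℕ → Finset Ap) (i : ℕ) : List (Finset Ap) :=
  (List.range i).map w

/-- The finite infix `w_{ij} = w[i]⋯w[j-1]` of an infinite word. -/
def infixWord (w : ℕ → Finset Ap) (i j : ℕ) : List (Finset Ap) :=
  (List.range (j - i)).map (fun k => w (i + k))

/-- Evaluation of a formula as a propositional formula, where every maximal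
proper subformula (root not `∧`/`∨`) is treated as a propositional variable
whose truth value is given by the assignment `v`. -/
def propEval (v : LTL Ap → Prop) : LTL Ap → Prop
  | .tt => True
  | .ff => False
  | .conj φ ψ => propEval v φ ∧ propEval v ψ
  | .disj φ ψ => propEval v φ ∨ propEval v ψ
  | φ => v φ

/-- Propositional equivalence `φ ≡_P ψ`. -/
def propEquiv (φ ψ : LTL Ap) : Prop := ∀ v, propEval v φ ↔ propEval v ψ

/-- The set of subformulas of a formula (including itself). -/
def subf : LTL Ap → Set (LTL Ap)
  | .tt => {LTL.tt}
  | .ff => {LTL.ff}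
  | .atom a => {LTL.atom a}
  | .natom a => {LTL.natom a}
  | .conj φ ψ => insert (.conj φ ψ) (subf φ ∪ subf ψ)
  | .disj φ ψ => insert (.disj φ ψ) (subf φ ∪ subf ψ)
  | .next φ => insert (.next φ) (subf φ)
  | .fut φ => insert (.fut φ) (subf φ)
  | .glob φ => insert (.glob φ) (subf φ)
  | .untl φ ψ => insert (.untl φ ψ) (subf φ ∪ subf ψ)
  | .wUntl φ ψ => insert (.wUntl φ ψ) (subf φ ∪ subf ψ)
  | .strongRel φ ψ => insert (.strongRel φ ψ) (subf φ ∪ subf ψ)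
  | .rel φ ψ => insert (.rel φ ψ) (subf φ ∪ subf ψ)

/-- A formula is proper if its root is not a conjunction or a disjunction. -/
def isProper : LTL Ap → Prop
  | .conj _ _ => False
  | .disj _ _ => False
  | _ => True

/-- The set of proper subformulas of `φ`. -/
def properSubf (φ : LTL Ap) : Set (LTL Ap) := {ψ | ψ ∈ subf φ ∧ isProper ψ}

/-- Formulas whose root is a least-fixed-point operator (`F`, `U`, `M`). -/
def isMu : LTL Ap → Prop
  | .fut _ => True
  | .untl _ _ => True
  | .strongRel _ _ => True
  | _ => False

/-- Formulas whose root is a greatest-fixed-point operator (`G`, `W`, `R`). -/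
def isNu : LTL Ap → Prop
  | .glob _ => True
  | .wUntl _ _ => True
  | .rel _ _ => True
  | _ => False

/-- `μ(φ)`: subformulas of `φ` of the form `Fψ`, `ψ₁Uψ₂`, `ψ₁Mψ₂`. -/
def muSet (φ : LTL Ap) : Set (LTL Ap) := {ψ | ψ ∈ subf φ ∧ isMu ψ}

/-- `ν(φ)`: subformulas of `φ` of the form `Gψ`, `ψ₁Wψ₂`, `ψ₁Rψ₂`. -/
def nuSet (φ : LTL Ap) : Set (LTL Ap) := {ψ | ψ ∈ subf φ ∧ isNu ψ}

/-- `GF_w = {ψ ∈ μ(φ) | w ⊨ GFψ}`. -/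
def GFSet (φ : LTL Ap) (w : ℕ → Finset Ap) : Set (LTL Ap) :=
  {ψ | ψ ∈ muSet φ ∧ Sat w (.glob (.fut ψ))}

/-- `F_w = {ψ ∈ μ(φ) | w ⊨ Fψ}`. -/
def FSet (φ : LTL Ap) (w : ℕ → Finset Ap) : Set (LTL Ap) :=
  {ψ | ψ ∈ muSet φ ∧ Sat w (.fut ψ)}

/-- `FG_w = {ψ ∈ ν(φ) | w ⊨ FGψ}`. -/
def FGSet (φ : LTL Ap) (w : ℕ → Finset Ap) : Set (LTL Ap) :=
  {ψ | ψ ∈ nuSet φ ∧ Sat w (.fut (.glob ψ))}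

/-- `G_w = {ψ ∈ ν(φ) | w ⊨ Gψ}`. -/
def GSet (φ : LTL Ap) (w : ℕ → Finset Ap) : Set (LTL Ap) :=
  {ψ | ψ ∈ nuSet φ ∧ Sat w (.glob ψ)}

open scoped Classical in
/-- `φ[X]_ν`. -/
noncomputable def evalNu (X : Set (LTL Ap)) : LTL Ap → LTL Ap
  | .tt => .tt
  | .ff => .ff
  | .atom a => .atom a
  | .natom a => .natom a
  | .conj φ ψ => .conj (evalNu X φ) (evalNu X ψ)
  | .disj φ ψ => .disj (evalNu X φ) (evalNu X ψ)
  | .next φ => .next (evalNu X φ)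
  | .glob φ => .glob (evalNu X φ)
  | .wUntl φ ψ => .wUntl (evalNu X φ) (evalNu X ψ)
  | .rel φ ψ => .rel (evalNu X φ) (evalNu X ψ)
  | .fut φ => if LTL.fut φ ∈ X then .tt else .ff
  | .untl φ ψ => if LTL.untl φ ψ ∈ X then .wUntl (evalNu X φ) (evalNu X ψ) else .ff
  | .strongRel φ ψ => if LTL.strongRel φ ψ ∈ X then .rel (evalNu X φ) (evalNu X ψ) else .ff

open scoped Classical in
/-- `φ[Y]_μ`. -/
noncomputable def evalMu (Y : Set (LTL Ap)) : LTL Ap → LTL Ap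
  | .tt => .tt
  | .ff => .ff
  | .atom a => .atom a
  | .natom a => .natom a
  | .conj φ ψ => .conj (evalMu Y φ) (evalMu Y ψ)
  | .disj φ ψ => .disj (evalMu Y φ) (evalMu Y ψ)
  | .next φ => .next (evalMu Y φ)
  | .fut φ => .fut (evalMu Y φ)
  | .untl φ ψ => .untl (evalMu Y φ) (evalMu Y ψ)
  | .strongRel φ ψ => .strongRel (evalMu Y φ) (evalMu Y ψ)
  | .glob φ => if LTL.glob φ ∈ Y then .tt else .ff
  | .wUntl φ ψ => if LTL.wUntl φ ψ ∈ Y then .tt else .untl (evalMu Y φ) (evalMu Y ψ)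
  | .rel φ ψ => if LTL.rel φ ψ ∈ Y then .tt else .strongRel (evalMu Y φ) (evalMu Y ψ)

/-- Concatenation `u·w` of a finite word and an infinite word. -/
def wordAppend (u : List (Finset Ap)) (w : ℕ → Finset Ap) : ℕ → Finset Ap :=
  fun i => if h : i < u.length then u.get ⟨i, h⟩ else w (i - u.length)

/-- The smallest set of formulas containing `tt`, `ff` and all elements of `S`
that is closed under conjunction and disjunction. -/
inductive PosBool (S : Set (LTL Ap)) : LTL Ap → Prop
  | tt : PosBool S .tt
  | ff : PosBool S .ff
  | base {ψ : LTL Ap} : ψ ∈ S → PosBool S ψ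
  | conj {φ ψ : LTL Ap} : PosBool S φ → PosBool S ψ → PosBool S (.conj φ ψ)
  | disj {φ ψ : LTL Ap} : PosBool S φ → PosBool S ψ → PosBool S (.disj φ ψ)

/-- `Reach(φ)`: the set of `≡_P`-equivalence classes of the formulas `af(φ,u)`
over all finite words `u`. -/
def Reach (φ : LTL Ap) : Set (Set (LTL Ap)) :=
  {C | ∃ u : List (Finset Ap), C = {ψ | propEquiv ψ (af φ u)}}

/-- The fragment `μLTL`: only `tt`, `ff`, literals, `∧`, `∨`, `X`, `F`, `U`, `M`. -/
def inMuLTL : LTL Ap → Prop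
  | .tt => True
  | .ff => True
  | .atom _ => True
  | .natom _ => True
  | .conj φ ψ => inMuLTL φ ∧ inMuLTL ψ
  | .disj φ ψ => inMuLTL φ ∧ inMuLTL ψ
  | .next φ => inMuLTL φ
  | .fut φ => inMuLTL φ
  | .untl φ ψ => inMuLTL φ ∧ inMuLTL ψ
  | .strongRel φ ψ => inMuLTL φ ∧ inMuLTL ψ
  | .glob _ => False
  | .wUntl _ _ => False
  | .rel _ _ => False

/-- The fragment `νLTL`: only `tt`, `ff`, literals, `∧`, `∨`, `X`, `G`, `W`, `R`. -/
def inNuLTL : LTL Ap → Prop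
  | .tt => True
  | .ff => True
  | .atom _ => True
  | .natom _ => True
  | .conj φ ψ => inNuLTL φ ∧ inNuLTL ψ
  | .disj φ ψ => inNuLTL φ ∧ inNuLTL ψ
  | .next φ => inNuLTL φ
  | .glob φ => inNuLTL φ
  | .wUntl φ ψ => inNuLTL φ ∧ inNuLTL ψ
  | .rel φ ψ => inNuLTL φ ∧ inNuLTL ψ
  | .fut _ => False
  | .untl _ _ => False
  | .strongRel _ _ => False

/-! ### Auxiliary material for stmt5 -/

section Stmt5Aux
set_option linter.unusedSectionVars false

lemma suffix_zero (w : ℕ → Finset Ap) : suffix w 0 = w := funext fun k => congrArg w (by omega)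

lemma suffix_suffix (w : ℕ → Finset Ap) (i j : ℕ) :
    suffix (suffix w i) j = suffix w (i + j) := funext fun k => congrArg w (by omega)

lemma prefixWord_zero (w : ℕ → Finset Ap) : prefixWord w 0 = [] := rfl

lemma prefixWord_succ_cons (w : ℕ → Finset Ap) (i : ℕ) :
    prefixWord w (i + 1) = w 0 :: prefixWord (suffix w 1) i := by
  simp [prefixWord, List.range_succ_eq_map, List.map_map, suffix, Function.comp,
    Nat.add_comm]

lemma prefixWord_succ_snoc (w : ℕ → Finset Ap) (i : ℕ) :
    prefixWord w (i + 1) = prefixWord w i ++ [w i] := by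
  simp [prefixWord, List.range_succ]

lemma af_conj (φ ψ : LTL Ap) (u : List (Finset Ap)) :
    af (.conj φ ψ) u = .conj (af φ u) (af ψ u) := by
  induction u generalizing φ ψ with
  | nil => rfl
  | cons ν u ih => simp [af, afLetter, ih]

lemma af_disj (φ ψ : LTL Ap) (u : List (Finset Ap)) :
    af (.disj φ ψ) u = .disj (af φ u) (af ψ u) := by
  induction u generalizing φ ψ with
  | nil => rfl
  | cons ν u ih => simp [af, afLetter, ih]

lemma af_append (φ : LTL Ap) (u v : List (Finset Ap)) :
    af φ (u ++ v) = af (af φ u) v := by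
  induction u generalizing φ with
  | nil => rfl
  | cons ν u ih => simp [af, ih]

/-- Evaluation under the all-true assignment. -/
def Etrue (χ : LTL Ap) : Prop := propEval (fun _ => True) χ

lemma propEval_mono {v v' : LTL Ap → Prop} (h : ∀ ξ, v ξ → v' ξ) :
    ∀ χ : LTL Ap, propEval v χ → propEval v' χ := by
  intro χ
  induction χ with
  | conj φ ψ ihφ ihψ => intro ⟨h1, h2⟩; exact ⟨ihφ h1, ihψ h2⟩
  | disj φ ψ ihφ ihψ => rintro (h1 | h2); exacts [Or.inl (ihφ h1), Or.inr (ihψ h2)]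
  | tt => exact id
  | ff => exact id
  | atom a => exact h _
  | natom a => exact h _
  | next φ _ => exact h _
  | fut φ _ => exact h _
  | glob φ _ => exact h _
  | untl φ ψ _ _ => exact h _
  | wUntl φ ψ _ _ => exact h _
  | strongRel φ ψ _ _ => exact h _
  | rel φ ψ _ _ => exact h _

lemma propEquiv_ff_iff (χ : LTL Ap) : propEquiv χ LTL.ff ↔ ¬ Etrue χ := by
  constructor
  · intro h he; exact (h (fun _ => True)).mp he
  · intro h v
    constructor
    · intro hv; exact absurd (propEval_mono (fun _ _ => trivial) χ hv) h
    · intro hff; exact hff.elim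

lemma sat_propEval {w : ℕ → Finset Ap} {χ : LTL Ap} (h : Sat w χ) : propEval (Sat w) χ := by
  induction χ with
  | conj φ ψ ihφ ihψ => exact ⟨ihφ h.1, ihψ h.2⟩
  | disj φ ψ ihφ ihψ => exact h.elim (fun h1 => Or.inl (ihφ h1)) (fun h2 => Or.inr (ihψ h2))
  | tt => trivial
  | ff => exact h
  | atom a => exact h
  | natom a => exact h
  | next φ _ => exact h
  | fut φ _ => exact h
  | glob φ _ => exact h
  | untl φ ψ _ _ => exact h
  | wUntl φ ψ _ _ => exact h
  | strongRel φ ψ _ _ => exact h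
  | rel φ ψ _ _ => exact h

lemma inNuLTL_afLetter {φ : LTL Ap} (h : inNuLTL φ) (ν : Finset Ap) :
    inNuLTL (afLetter φ ν) := by
  induction φ with
  | tt => trivial
  | ff => trivial
  | atom a => by_cases ha : a ∈ ν <;> simp [afLetter, ha, inNuLTL]
  | natom a => by_cases ha : a ∈ ν <;> simp [afLetter, ha, inNuLTL]
  | conj φ ψ ihφ ihψ => exact ⟨ihφ h.1, ihψ h.2⟩
  | disj φ ψ ihφ ihψ => exact ⟨ihφ h.1, ihψ h.2⟩
  | next φ _ => exact h
  | fut φ _ => exact h.elim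
  | glob φ ihφ => exact ⟨ihφ h, h⟩
  | untl φ ψ _ _ => exact h.elim
  | wUntl φ ψ ihφ ihψ => exact ⟨ihψ h.2, ihφ h.1, h⟩
  | strongRel φ ψ _ _ => exact h.elim
  | rel φ ψ ihφ ihψ => exact ⟨ihψ h.2, ihφ h.1, h⟩

lemma sat_afLetter {φ : LTL Ap} (h : inNuLTL φ) {w : ℕ → Finset Ap} (hs : Sat w φ) :
    Sat (suffix w 1) (afLetter φ (w 0)) := by
  induction φ generalizing w with
  | tt => trivial
  | ff => exact hs.elim
  | atom a =>
    simp only [Sat] at hs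
    simp [afLetter, hs, Sat]
  | natom a =>
    simp only [Sat] at hs
    simp [afLetter, hs, Sat]
  | conj φ ψ ihφ ihψ => exact ⟨ihφ h.1 hs.1, ihψ h.2 hs.2⟩
  | disj φ ψ ihφ ihψ => exact hs.elim (fun h1 => Or.inl (ihφ h.1 h1)) (fun h2 => Or.inr (ihψ h.2 h2))
  | next φ _ => exact hs
  | fut φ _ => exact h.elim
  | glob φ ihφ =>
    refine ⟨ihφ h (by simpa [suffix_zero] using hs 0), fun k => ?_⟩
    rw [suffix_suffix]
    simpa using hs (1 + k)
  | untl φ ψ _ _ => exact h.elim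
  | wUntl φ ψ ihφ ihψ =>
    rcases hs with hall | ⟨k, hk, hj⟩
    · refine Or.inr ⟨ihφ h.1 (by simpa [suffix_zero] using hall 0), Or.inl fun k => ?_⟩
      rw [suffix_suffix]; exact hall (1 + k)
    · cases k with
      | zero => exact Or.inl (ihψ h.2 (by simpa [suffix_zero] using hk))
      | succ k =>
        refine Or.inr ⟨ihφ h.1 (by simpa [suffix_zero] using hj 0 (Nat.succ_pos k)),
          Or.inr ⟨k, ?_, fun j hjk => ?_⟩⟩
        · rw [suffix_suffix]; simpa [Nat.add_comm] using hk
        · rw [suffix_suffix]; simpa [Nat.add_comm] using hj (j + 1) (by omega)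
  | strongRel φ ψ _ _ => exact h.elim
  | rel φ ψ ihφ ihψ =>
    rcases hs with hall | ⟨k, hk, hj⟩
    · refine ⟨ihψ h.2 (by simpa [suffix_zero] using hall 0), Or.inr (Or.inl fun k => ?_)⟩
      rw [suffix_suffix]; exact hall (1 + k)
    · cases k with
      | zero =>
        exact ⟨ihψ h.2 (by simpa [suffix_zero] using hj 0 le_rfl), Or.inl (ihφ h.1 (by simpa [suffix_zero] using hk))⟩
      | succ k =>
        refine ⟨ihψ h.2 (by simpa [suffix_zero] using hj 0 (Nat.zero_le _)),
          Or.inr (Or.inr ⟨k, ?_, fun j hjk => ?_⟩)⟩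
        · rw [suffix_suffix]; simpa [Nat.add_comm] using hk
        · rw [suffix_suffix]; simpa [Nat.add_comm] using hj (j + 1) (by omega)

lemma sat_af_prefix {φ : LTL Ap} (h : inNuLTL φ) {w : ℕ → Finset Ap} (hs : Sat w φ) :
    ∀ i, Sat (suffix w i) (af φ (prefixWord w i)) := by
  intro i
  induction i generalizing φ w with
  | zero => simpa [prefixWord_zero, af, suffix_zero] using hs
  | succ i ih =>
    rw [prefixWord_succ_cons]
    have := ih (inNuLTL_afLetter h (w 0)) (sat_afLetter h hs)
    rw [suffix_suffix] at this
    simpa [af, Nat.add_comm] using this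

lemma Etrue_conj {φ ψ : LTL Ap} : Etrue (.conj φ ψ) ↔ Etrue φ ∧ Etrue ψ := Iff.rfl

lemma Etrue_disj {φ ψ : LTL Ap} : Etrue (.disj φ ψ) ↔ Etrue φ ∨ Etrue ψ := Iff.rfl

lemma Etrue_afLetter_imp {χ : LTL Ap} {ν : Finset Ap} (h : Etrue (afLetter χ ν)) : Etrue χ := by
  induction χ with
  | ff => exact h
  | conj φ ψ ihφ ihψ => exact ⟨ihφ h.1, ihψ h.2⟩
  | disj φ ψ ihφ ihψ => exact h.elim (fun h1 => Or.inl (ihφ h1)) (fun h2 => Or.inr (ihψ h2))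
  | tt => trivial
  | atom a => trivial
  | natom a => trivial
  | next φ _ => trivial
  | fut φ _ => trivial
  | glob φ _ => trivial
  | untl φ ψ _ _ => trivial
  | wUntl φ ψ _ _ => trivial
  | strongRel φ ψ _ _ => trivial
  | rel φ ψ _ _ => trivial

lemma Etrue_af_pref_succ {φ : LTL Ap} {w : ℕ → Finset Ap} {i : ℕ}
    (h : Etrue (af φ (prefixWord w (i + 1)))) : Etrue (af φ (prefixWord w i)) := by
  rw [prefixWord_succ_snoc, af_append] at h
  exact Etrue_afLetter_imp h

lemma Etrue_af_pref_le {φ : LTL Ap} {w : ℕ → Finset Ap} {i j : ℕ} (hij : i ≤ j)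
    (h : Etrue (af φ (prefixWord w j))) : Etrue (af φ (prefixWord w i)) := by
  induction j with
  | zero => exact (Nat.le_zero.mp hij) ▸ h
  | succ j ih =>
    rcases Nat.lt_or_ge i (j + 1) with hlt | hge
    · exact ih (by omega) (Etrue_af_pref_succ h)
    · exact (by omega : i = j + 1) ▸ h

lemma af_prefix_cons (φ : LTL Ap) (w : ℕ → Finset Ap) (i : ℕ) :
    af φ (prefixWord w (i + 1)) = af (afLetter φ (w 0)) (prefixWord (suffix w 1) i) := by
  rw [prefixWord_succ_cons]; rfl

lemma pref_shift (φ : LTL Ap) (w : ℕ → Finset Ap) (j m : ℕ) :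
    Etrue (af φ (prefixWord (suffix (suffix w 1) j) m)) ↔
      Etrue (af φ (prefixWord (suffix w (j + 1)) m)) := by
  rw [suffix_suffix, Nat.add_comm]

lemma Etrue_af_glob (φ : LTL Ap) (w : ℕ → Finset Ap) (i : ℕ) :
    Etrue (af (.glob φ) (prefixWord w i)) ↔
      ∀ k < i, Etrue (af φ (prefixWord (suffix w k) (i - k))) := by
  induction i generalizing w with
  | zero => exact iff_of_true trivial (fun k hk => absurd hk (by omega))
  | succ i ih =>
    rw [af_prefix_cons]
    show Etrue (af (.conj (afLetter φ (w 0)) (.glob φ)) (prefixWord (suffix w 1) i)) ↔ _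
    rw [af_conj, Etrue_conj, ih]
    constructor
    · rintro ⟨h0, hrest⟩ k hk
      match k, hk with
      | 0, _ =>
        rw [suffix_zero]
        rw [← af_prefix_cons] at h0
        exact h0
      | (j+1), hk =>
        have := (pref_shift φ w j (i - j)).mp (hrest j (by omega))
        have e : i + 1 - (j + 1) = i - j := by omega
        rw [e]; exact this
    · intro hall
      constructor
      · rw [← af_prefix_cons]
        have := hall 0 (by omega)
        rw [suffix_zero] at this
        exact this
      · intro j hj
        have := hall (j + 1) (by omega)
        have e : i + 1 - (j + 1) = i - j := by omega
        rw [e] at this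
        exact (pref_shift φ w j (i - j)).mpr this

lemma Etrue_af_wUntl (φ ψ : LTL Ap) (w : ℕ → Finset Ap) (i : ℕ) :
    Etrue (af (.wUntl φ ψ) (prefixWord w i)) ↔
      ∃ k, k ≤ i ∧ (∀ j < k, Etrue (af φ (prefixWord (suffix w j) (i - j)))) ∧
        (k = i ∨ Etrue (af ψ (prefixWord (suffix w k) (i - k)))) := by
  induction i generalizing w with
  | zero =>
    exact iff_of_true trivial ⟨0, le_rfl, fun j hj => absurd hj (by omega), Or.inl rfl⟩
  | succ i ih =>
    rw [af_prefix_cons]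
    show Etrue (af (.disj (afLetter ψ (w 0)) (.conj (afLetter φ (w 0)) (.wUntl φ ψ)))
      (prefixWord (suffix w 1) i)) ↔ _
    rw [af_disj, af_conj, Etrue_disj, Etrue_conj, ih]
    constructor
    · rintro (hψ0 | ⟨hφ0, k, hk, hφ, hlast⟩)
      · refine ⟨0, by omega, fun j hj => absurd hj (by omega), Or.inr ?_⟩
        rw [Nat.sub_zero, suffix_zero, af_prefix_cons]
        exact hψ0
      · refine ⟨k + 1, by omega, fun j hj => ?_, ?_⟩
        · match j, hj with
          | 0, _ =>
            rw [Nat.sub_zero, suffix_zero, af_prefix_cons]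
            exact hφ0
          | (j+1), hj =>
            have := (pref_shift φ w j (i - j)).mp (hφ j (by omega))
            have e : i + 1 - (j + 1) = i - j := by omega
            rw [e]; exact this
        · rcases hlast with rfl | hψ
          · exact Or.inl rfl
          · refine Or.inr ?_
            have := (pref_shift ψ w k (i - k)).mp hψ
            have e : i + 1 - (k + 1) = i - k := by omega
            rw [e]; exact this
    · rintro ⟨k, hk, hφ, hlast⟩
      match k with
      | 0 =>
        rcases hlast with h0 | hψ
        · exact absurd h0 (by omega)
        · refine Or.inl ?_
          rw [Nat.sub_zero, suffix_zero, af_prefix_cons] at hψ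
          exact hψ
      | (k+1) =>
        refine Or.inr ⟨?_, k, by omega, fun j hj => ?_, ?_⟩
        · have := hφ 0 (by omega)
          rw [Nat.sub_zero, suffix_zero, af_prefix_cons] at this
          exact this
        · have := hφ (j + 1) (by omega)
          have e : i + 1 - (j + 1) = i - j := by omega
          rw [e] at this
          exact (pref_shift φ w j (i - j)).mpr this
        · rcases hlast with he | hψ
          · exact Or.inl (by omega)
          · refine Or.inr ?_
            have e : i + 1 - (k + 1) = i - k := by omega
            rw [e] at hψ
            exact (pref_shift ψ w k (i - k)).mpr hψ

lemma Etrue_af_rel (φ ψ : LTL Ap) (w : ℕ → Finset Ap) (i : ℕ) :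
    Etrue (af (.rel φ ψ) (prefixWord w i)) ↔
      ∃ k, k ≤ i ∧ (∀ j < k, Etrue (af ψ (prefixWord (suffix w j) (i - j)))) ∧
        (k = i ∨ (Etrue (af ψ (prefixWord (suffix w k) (i - k))) ∧
          Etrue (af φ (prefixWord (suffix w k) (i - k))))) := by
  induction i generalizing w with
  | zero =>
    exact iff_of_true trivial ⟨0, le_rfl, fun j hj => absurd hj (by omega), Or.inl rfl⟩
  | succ i ih =>
    rw [af_prefix_cons]
    show Etrue (af (.conj (afLetter ψ (w 0)) (.disj (afLetter φ (w 0)) (.rel φ ψ)))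
      (prefixWord (suffix w 1) i)) ↔ _
    rw [af_conj, af_disj, Etrue_conj, Etrue_disj, ih]
    constructor
    · rintro ⟨hψ0, hφ0 | ⟨k, hk, hψ, hlast⟩⟩
      · refine ⟨0, by omega, fun j hj => absurd hj (by omega), Or.inr ⟨?_, ?_⟩⟩
        · rw [Nat.sub_zero, suffix_zero, af_prefix_cons]; exact hψ0
        · rw [Nat.sub_zero, suffix_zero, af_prefix_cons]; exact hφ0
      · refine ⟨k + 1, by omega, fun j hj => ?_, ?_⟩
        · match j, hj with
          | 0, _ =>
            rw [Nat.sub_zero, suffix_zero, af_prefix_cons]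
            exact hψ0
          | (j+1), hj =>
            have := (pref_shift ψ w j (i - j)).mp (hψ j (by omega))
            have e : i + 1 - (j + 1) = i - j := by omega
            rw [e]; exact this
        · rcases hlast with rfl | ⟨h1, h2⟩
          · exact Or.inl rfl
          · have e : i + 1 - (k + 1) = i - k := by omega
            rw [e]
            exact Or.inr ⟨(pref_shift ψ w k (i - k)).mp h1, (pref_shift φ w k (i - k)).mp h2⟩
    · rintro ⟨k, hk, hψ, hlast⟩
      match k with
      | 0 =>
        rcases hlast with h0 | ⟨h1, h2⟩
        · exact absurd h0 (by omega)
        · rw [Nat.sub_zero, suffix_zero, af_prefix_cons] at h1 h2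
          exact ⟨h1, Or.inl h2⟩
      | (k+1) =>
        have hψ0 : Etrue (af (afLetter ψ (w 0)) (prefixWord (suffix w 1) i)) := by
          have := hψ 0 (by omega)
          rw [Nat.sub_zero, suffix_zero, af_prefix_cons] at this
          exact this
        refine ⟨hψ0, Or.inr ⟨k, by omega, fun j hj => ?_, ?_⟩⟩
        · have := hψ (j + 1) (by omega)
          have e : i + 1 - (j + 1) = i - j := by omega
          rw [e] at this
          exact (pref_shift ψ w j (i - j)).mpr this
        · rcases hlast with he | ⟨h1, h2⟩
          · exact Or.inl (by omega)
          · have e : i + 1 - (k + 1) = i - k := by omega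
            rw [e] at h1 h2
            exact Or.inr ⟨(pref_shift ψ w k (i - k)).mpr h1, (pref_shift φ w k (i - k)).mpr h2⟩

lemma pigeon (f : ℕ → ℕ) (k₀ N : ℕ) (h : ∀ i, N ≤ i → f i ≤ k₀) :
    ∃ k, k ≤ k₀ ∧ ∀ m, ∃ i, m ≤ i ∧ f i = k := by
  by_contra hc
  push_neg at hc
  have hc' : ∀ k, ∃ m, k ≤ k₀ → ∀ i, m ≤ i → f i ≠ k := by
    intro k
    by_cases hk : k ≤ k₀
    · obtain ⟨m, hm⟩ := hc k hk
      exact ⟨m, fun _ => hm⟩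
    · exact ⟨0, fun h' => absurd h' hk⟩
  choose g hg using hc'
  set M := N + (Finset.range (k₀ + 1)).sup g with hM
  have h1 : f M ≤ k₀ := h M (by omega)
  have h2 : g (f M) ≤ M := by
    have := Finset.le_sup (f := g) (Finset.mem_range.mpr (by omega : f M < k₀ + 1))
    omega
  exact hg (f M) h1 M h2 rfl

lemma sat_of_Etrue : ∀ (φ : LTL Ap), inNuLTL φ → ∀ (w : ℕ → Finset Ap),
    (∀ i, Etrue (af φ (prefixWord w i))) → Sat w φ := by
  intro φ
  induction φ with
  | tt => intro _ w _; trivial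
  | ff => intro _ w H; exact H 0
  | atom a =>
    intro _ w H
    by_cases ha : a ∈ w 0
    · exact ha
    · exfalso
      have := H 1
      rw [af_prefix_cons] at this
      simp only [afLetter, if_neg ha] at this
      exact this
  | natom a =>
    intro _ w H
    by_cases ha : a ∈ w 0
    · exfalso
      have := H 1
      rw [af_prefix_cons] at this
      simp only [afLetter, if_pos ha] at this
      exact this
    · exact ha
  | conj φ ψ ihφ ihψ =>
    intro h w H
    refine ⟨ihφ h.1 w fun i => ?_, ihψ h.2 w fun i => ?_⟩
    · have := H i; rw [af_conj] at this; exact this.1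
    · have := H i; rw [af_conj] at this; exact this.2
  | disj φ ψ ihφ ihψ =>
    intro h w H
    by_cases hφ : ∀ i, Etrue (af φ (prefixWord w i))
    · exact Or.inl (ihφ h.1 w hφ)
    · push_neg at hφ
      obtain ⟨m, hm⟩ := hφ
      refine Or.inr (ihψ h.2 w fun i => ?_)
      have := H (max i m)
      rw [af_disj] at this
      rcases (Etrue_disj.mp this) with h1 | h2
      · exact absurd (Etrue_af_pref_le (le_max_right i m) h1) hm
      · exact Etrue_af_pref_le (le_max_left i m) h2
  | next φ ih =>
    intro h w H
    refine ih h (suffix w 1) fun i => ?_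
    have := H (i + 1)
    rw [af_prefix_cons] at this
    exact this
  | fut φ _ => intro h; exact h.elim
  | untl φ ψ _ _ => intro h; exact h.elim
  | strongRel φ ψ _ _ => intro h; exact h.elim
  | glob φ ih =>
    intro h w H k
    refine ih h (suffix w k) fun m => ?_
    have := (Etrue_af_glob φ w (k + m + 1)).mp (H (k + m + 1)) k (by omega)
    have e : k + m + 1 - k = m + 1 := by omega
    rw [e] at this
    exact Etrue_af_pref_succ this
  | wUntl φ ψ ihφ ihψ =>
    intro h w H
    have hchar := fun i => (Etrue_af_wUntl φ ψ w i).mp (H i)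
    choose k hk1 hk2 hk3 using hchar
    by_cases hA : ∀ c m, Etrue (af φ (prefixWord (suffix w c) m))
    · exact Or.inl fun c => ihφ h.1 _ (hA c)
    · push_neg at hA
      obtain ⟨c, m₀, hcm⟩ := hA
      have hbound : ∀ i, c + m₀ + 1 ≤ i → k i ≤ c := by
        intro i hi
        by_contra hlt
        push_neg at hlt
        exact hcm (Etrue_af_pref_le (by omega) (hk2 i c hlt))
      obtain ⟨k₀, hk₀le, hk₀⟩ := pigeon k c (c + m₀ + 1) hbound
      refine Or.inr ⟨k₀, ?_, fun j hj => ?_⟩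
      · refine ihψ h.2 _ fun m => ?_
        obtain ⟨i, hi, hik⟩ := hk₀ (max (m + k₀) (c + m₀ + 1))
        have hiN : c + m₀ + 1 ≤ i := le_trans (le_max_right _ _) hi
        have hklt : k i < i := by have := hbound i hiN; omega
        have hlast := (hk3 i).resolve_left (by omega)
        rw [hik] at hlast
        exact Etrue_af_pref_le (by omega) hlast
      · refine ihφ h.1 _ fun m => ?_
        obtain ⟨i, hi, hik⟩ := hk₀ (max (m + j) (c + m₀ + 1))
        have := hk2 i j (by omega)
        exact Etrue_af_pref_le (by omega) this
  | rel φ ψ ihφ ihψ =>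
    intro h w H
    have hchar := fun i => (Etrue_af_rel φ ψ w i).mp (H i)
    choose k hk1 hk2 hk3 using hchar
    by_cases hA : ∀ c m, Etrue (af ψ (prefixWord (suffix w c) m))
    · exact Or.inl fun c => ihψ h.2 _ (hA c)
    · push_neg at hA
      obtain ⟨c, m₀, hcm⟩ := hA
      have hbound : ∀ i, c + m₀ + 1 ≤ i → k i ≤ c := by
        intro i hi
        by_contra hlt
        push_neg at hlt
        exact hcm (Etrue_af_pref_le (by omega) (hk2 i c hlt))
      obtain ⟨k₀, hk₀le, hk₀⟩ := pigeon k c (c + m₀ + 1) hbound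
      refine Or.inr ⟨k₀, ?_, fun j hj => ?_⟩
      · refine ihφ h.1 _ fun m => ?_
        obtain ⟨i, hi, hik⟩ := hk₀ (max (m + k₀) (c + m₀ + 1))
        have hiN : c + m₀ + 1 ≤ i := le_trans (le_max_right _ _) hi
        have hklt : k i < i := by have := hbound i hiN; omega
        have hlast := (hk3 i).resolve_left (by omega)
        rw [hik] at hlast
        exact Etrue_af_pref_le (by omega) hlast.2
      · refine ihψ h.2 _ fun m => ?_
        obtain ⟨i, hi, hik⟩ := hk₀ (max (m + j) (c + m₀ + 1))
        have hiN : c + m₀ + 1 ≤ i := le_trans (le_max_right _ _) hi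
        rcases Nat.lt_or_ge j (k i) with hjlt | hjge
        · exact Etrue_af_pref_le (by omega) (hk2 i j hjlt)
        · have hje : j = k i := by omega
          have hklt : k i < i := by have := hbound i hiN; omega
          have hlast := (hk3 i).resolve_left (by omega)
          rw [← hje] at hlast
          exact Etrue_af_pref_le (by omega) hlast.1

end Stmt5Aux

/-- for `φ ∈ νLTL`, `w ⊨ φ` iff `af(φ, w_{0i}) ≢_P ff` for all `i`. -/
theorem stmt5 {Ap : Type} [DecidableEq Ap] [Fintype Ap]
    (φ : LTL Ap) (hφ : inNuLTL φ) (w : ℕ → Finset Ap) :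
    Sat w φ ↔ ∀ i : ℕ, ¬ propEquiv (af φ (prefixWord w i)) LTL.ff := by
  constructor
  · intro hs i hequiv
    have h1 := sat_af_prefix hφ hs i
    have h2 := sat_propEval h1
    exact (hequiv (Sat (suffix w i))).mp h2
  · intro h
    refine sat_of_Etrue φ hφ w fun i => ?_
    have := h i
    rw [propEquiv_ff_iff] at this
    exact not_not.mp this
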